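/- For every integer t ≥ 1 and real numbers 0 < α < β, the polynomial f_t^⋆(λ) := ∏_{s=0}^{t−1} (λ − r_{s,t})/(β − r_{s,t}), where r_{s,t} := α·(cos(π(s+1/2)/t) + cos(π/(2t)))/(1 + cos(π/(2t))), belongs to 𝒫_t'' and satisfies max_{λ∈[0,α]} |f_t^⋆(λ)| ≤ max_{λ∈[0,α]} |g(λ)| for every g ∈ 𝒫_t''. -/

import Mathlib

/-- A polynomial `f` is `t`-equioscillatory on `[a, b]` if there exist points
`a ≤ γ₀ < γ₁ < ⋯ < γ_{t-1} ≤ b` at which `|f|` attains its maximum over `[a, b]`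
and at which the values of `f` alternate in sign. -/
def Equioscillatory (f : Polynomial ℝ) (t : ℕ) (a b : ℝ) : Prop :=
  ∃ γ : ℕ → ℝ,
    (∀ s, s + 1 < t → γ s < γ (s + 1)) ∧
    (∀ s < t, γ s ∈ Set.Icc a b) ∧
    (∀ s < t, |f.eval (γ s)| = sSup ((fun x => |f.eval x|) '' Set.Icc a b)) ∧
    (∀ s, s + 1 < t → f.eval (γ (s + 1)) = - f.eval (γ s))


open Polynomial Real

lemma T_nd_coeff : ∀ n : ℕ, (Polynomial.Chebyshev.T ℝ n).natDegree ≤ n ∧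
    (Polynomial.Chebyshev.T ℝ n).coeff n = 2^(n-1) := by
  have key : ∀ n : ℕ, ((Polynomial.Chebyshev.T ℝ n).natDegree ≤ n ∧
      (Polynomial.Chebyshev.T ℝ n).coeff n = 2^(n-1)) ∧
      ((Polynomial.Chebyshev.T ℝ (n+1)).natDegree ≤ n+1 ∧
      (Polynomial.Chebyshev.T ℝ (n+1)).coeff (n+1) = 2^n) := by
    intro n
    induction n with
    | zero =>
      constructor
      · simp [Polynomial.Chebyshev.T_zero]
      · norm_num [Polynomial.Chebyshev.T_one]
    | succ n ih =>
      have hT : Polynomial.Chebyshev.T ℝ (((n:ℕ)+1:ℕ)+1) =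
          2 * X * Polynomial.Chebyshev.T ℝ ((n:ℤ)+1) - Polynomial.Chebyshev.T ℝ n := by
        have h2 : (((n:ℕ)+1:ℕ):ℤ) + 1 = (n:ℤ) + 2 := by push_cast; ring
        rw [h2]; exact Polynomial.Chebyshev.T_add_two ℝ n
      have hdeg1 : (2 * X * Polynomial.Chebyshev.T ℝ ((n:ℤ)+1)).natDegree ≤ n + 2 := by
        refine le_trans natDegree_mul_le ?_
        have h1 : (2 * X : ℝ[X]).natDegree ≤ 1 := by
          simpa using natDegree_C_mul_le (2:ℝ) X
        have := ih.2.1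
        omega
      refine ⟨⟨by exact_mod_cast ih.2.1, by exact_mod_cast ih.2.2⟩, ?_, ?_⟩
      · rw [hT]
        refine le_trans (natDegree_sub_le _ _) (max_le hdeg1 (le_trans ih.1.1 (by omega)))
      · rw [hT, coeff_sub]
        have h0 : (Polynomial.Chebyshev.T ℝ n).coeff (n+1+1) = 0 :=
          coeff_eq_zero_of_natDegree_lt (lt_of_le_of_lt ih.1.1 (by omega))
        have h1 : (2 * X * Polynomial.Chebyshev.T ℝ ((n:ℤ)+1)).coeff (n+1+1)
            = 2 * (Polynomial.Chebyshev.T ℝ ((n:ℤ)+1)).coeff (n+1) := by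
          rw [mul_assoc, (map_ofNat C 2).symm, coeff_C_mul, coeff_X_mul]
        rw [h0, h1, ih.2.2]
        ring
  exact fun n => (key n).1

lemma T_ge_one (n : ℕ) (y : ℝ) (hy : 1 ≤ y) :
    1 ≤ (Polynomial.Chebyshev.T ℝ n).eval y ∧
    (Polynomial.Chebyshev.T ℝ n).eval y ≤ (Polynomial.Chebyshev.T ℝ (n+1)).eval y := by
  induction n with
  | zero => simp [Polynomial.Chebyshev.T_zero, Polynomial.Chebyshev.T_one, hy]
  | succ n ih =>
    have hT : Polynomial.Chebyshev.T ℝ (((n:ℕ)+1:ℕ)+1) =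
        2 * X * Polynomial.Chebyshev.T ℝ ((n:ℤ)+1) - Polynomial.Chebyshev.T ℝ n := by
      have h2 : (((n:ℕ)+1:ℕ):ℤ) + 1 = (n:ℤ) + 2 := by push_cast; ring
      rw [h2]; exact Polynomial.Chebyshev.T_add_two ℝ n
    have h1 : (1:ℝ) ≤ (Polynomial.Chebyshev.T ℝ ((n:ℤ)+1)).eval y := by exact_mod_cast ih.1.trans ih.2
    have hc : ((n+1:ℕ):ℤ) = (n:ℤ)+1 := by push_cast; ring
    rw [hc]
    rw [hc] at hT
    refine ⟨h1, ?_⟩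
    rw [hT]
    simp only [eval_sub, eval_mul, eval_ofNat, eval_X]
    nlinarith [ih.2, ih.1]

lemma prod_eq_T (t : ℕ) (ht : 1 ≤ t) (x : ℕ → ℝ)
    (hx : ∀ s, x s = Real.cos (π*((s:ℝ)+1/2)/(t:ℝ))) (y : ℝ) :
    (Polynomial.Chebyshev.T ℝ t).eval y = 2^(t-1) * ∏ s ∈ Finset.range t, (y - x s) := by
  have ht0 : (0:ℝ) < t := by exact_mod_cast ht
  set θ : ℕ → ℝ := fun s => π*((s:ℝ)+1/2)/(t:ℝ) with hθ
  have hθmem : ∀ s < t, θ s ∈ Set.Icc 0 π := by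
    intro s hs
    constructor
    · positivity
    · rw [div_le_iff₀ ht0]
      have : (s:ℝ) + 1/2 ≤ t := by
        have : (s:ℝ) + 1 ≤ t := by exact_mod_cast hs
        linarith
      nlinarith [pi_pos]
  have hinj : Set.InjOn x (Finset.range t : Set ℕ) := by
    intro a ha b hb hab
    simp only [Finset.coe_range, Set.mem_Iio] at ha hb
    rw [hx a, hx b] at hab
    have := Real.injOn_cos (hθmem a ha) (hθmem b hb) hab
    have h1 := mul_right_cancel₀ (ne_of_gt ht0) ((div_eq_div_iff (ne_of_gt ht0) (ne_of_gt ht0)).mp this)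
    have h2 := mul_left_cancel₀ Real.pi_ne_zero h1
    have h3 : (a:ℝ) = b := by linarith
    exact_mod_cast h3
  have hTx : ∀ s, (Polynomial.Chebyshev.T ℝ t).eval (x s) = 0 := by
    intro s
    rw [hx s, Polynomial.Chebyshev.T_real_cos]
    rw [show (t:ℤ) * (π*((s:ℝ)+1/2)/(t:ℝ)) = (s:ℝ)*π + π/2 by
      push_cast; field_simp]
    rw [Real.cos_add_pi_div_two, Real.sin_nat_mul_pi]
    ring
  set P : ℝ[X] := ∏ s ∈ Finset.range t, (X - C (x s)) with hP
  have hPmonic : P.Monic := monic_prod_of_monic _ _ fun s _ => monic_X_sub_C (x s)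
  have hPdeg : P.natDegree = t := by
    rw [hP, natDegree_prod_of_monic _ _ fun s _ => monic_X_sub_C (x s)]
    simp [natDegree_X_sub_C]
  set Q : ℝ[X] := C ((2:ℝ)^(t-1)) * P with hQ
  have hQT : Q = Polynomial.Chebyshev.T ℝ t := by
    set D : ℝ[X] := Q - Polynomial.Chebyshev.T ℝ t with hD
    have hDdeg : D.natDegree ≤ t := by
      refine le_trans (natDegree_sub_le _ _) (max_le ?_ (T_nd_coeff t).1)
      exact le_trans (natDegree_C_mul_le _ _) hPdeg.le
    have hP1 : P.coeff t = 1 := by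
      have h := hPmonic.coeff_natDegree
      rwa [hPdeg] at h
    have hDcoeff : D.coeff t = 0 := by
      rw [hD, coeff_sub, hQ, coeff_C_mul, hP1, (T_nd_coeff t).2]
      ring
    have hDzero : D = 0 := by
      by_contra hne
      have hlt : D.natDegree < t := by
        rcases lt_or_eq_of_le hDdeg with h | h
        · exact h
        · exfalso
          apply hne
          have : D.leadingCoeff = 0 := by rw [Polynomial.leadingCoeff, h, hDcoeff]
          exact leadingCoeff_eq_zero.mp this
      have := Polynomial.eq_zero_of_natDegree_lt_card_of_eval_eq_zero' D
        ((Finset.range t).image x) ?_ ?_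
      · exact hne this
      · intro i hi
        simp only [Finset.mem_image] at hi
        obtain ⟨s, hs, rfl⟩ := hi
        rw [hD, eval_sub, hTx s, hQ, eval_mul, eval_C, hP, eval_prod]
        rw [Finset.prod_eq_zero hs (by simp)]
        ring
      · rwa [Finset.card_image_of_injOn hinj, Finset.card_range]
    have : Q - Polynomial.Chebyshev.T ℝ t = 0 := hDzero
    linear_combination (norm := ring_nf) this
  rw [← hQT, hQ, eval_mul, eval_C, hP, eval_prod]
  simp [eval_sub]

lemma mono_aux (t : ℕ) (γ : ℕ → ℝ) (h : ∀ s, s+1 < t → γ s < γ (s+1)) :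
    ∀ j, j < t → ∀ i, i < j → γ i < γ j := by
  intro j
  induction j with
  | zero => omega
  | succ j ihj =>
    intro hj i hi
    have hlast : γ j < γ (j+1) := h j hj
    rcases Nat.lt_succ_iff_lt_or_eq.mp hi with h' | rfl
    · exact (ihj (by omega) i h').trans hlast
    · exact hlast

lemma Equioscillatory' (f : Polynomial ℝ) (t : ℕ) (a b : ℝ) : True := trivial

lemma optimality (t : ℕ) (ht : 1 ≤ t) (α β : ℝ) (h0α : 0 < α) (hαβ : α < β) (f g : ℝ[X])
    (hfd : f.natDegree ≤ t) (hf0 : f.eval 0 = 0) (hfβ : f.eval β = 1)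
    (hfe : ∃ γ : ℕ → ℝ,
      (∀ s, s + 1 < t → γ s < γ (s + 1)) ∧
      (∀ s < t, γ s ∈ Set.Icc 0 α) ∧
      (∀ s < t, |f.eval (γ s)| = sSup ((fun x => |f.eval x|) '' Set.Icc 0 α)) ∧
      (∀ s, s + 1 < t → f.eval (γ (s + 1)) = - f.eval (γ s)))
    (hMf : 0 < sSup ((fun x => |f.eval x|) '' Set.Icc 0 α))
    (hgd : g.natDegree ≤ t) (hg0 : g.eval 0 = 0) (hgβ : g.eval β = 1) :
    sSup ((fun x => |f.eval x|) '' Set.Icc 0 α) ≤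
      sSup ((fun x => |g.eval x|) '' Set.Icc 0 α) := by
  set Mf := sSup ((fun x => |f.eval x|) '' Set.Icc 0 α) with hMfdef
  set Mg := sSup ((fun x => |g.eval x|) '' Set.Icc 0 α) with hMgdef
  by_contra hcon
  push_neg at hcon
  obtain ⟨γ, hγmono, hγmem, hγmax, hγalt⟩ := hfe
  have hgb : ∀ x ∈ Set.Icc (0:ℝ) α, |g.eval x| ≤ Mg := by
    intro x hx
    refine le_csSup ?_ ⟨x, hx, rfl⟩
    exact ((isCompact_Icc).image (continuous_abs.comp g.continuous)).bddAbove
  have hγlt : ∀ i j, i < j → j < t → γ i < γ j := by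
    intro i j hij hjt
    exact mono_aux t γ hγmono j hjt i hij
  have hsign : ∀ s, s+1 < t → (f-g).eval (γ s) * (f-g).eval (γ (s+1)) < 0 := by
    intro s hs
    have hs1 : s < t := by omega
    have ha : |f.eval (γ s)| = Mf := hγmax s hs1
    have hb : f.eval (γ (s+1)) = - f.eval (γ s) := hγalt s hs
    have hga := hgb (γ s) (hγmem s hs1)
    have hgb' := hgb (γ (s+1)) (hγmem (s+1) hs)
    rw [eval_sub, eval_sub, hb]
    have hga' := abs_le.mp hga
    have hgb'' := abs_le.mp hgb'
    rcases (abs_eq (le_of_lt hMf)).mp ha with h | h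
    · have h1 : 0 < f.eval (γ s) - g.eval (γ s) := by linarith
      have h2 : -f.eval (γ s) - g.eval (γ (s+1)) < 0 := by linarith
      exact mul_neg_of_pos_of_neg h1 h2
    · have h1 : f.eval (γ s) - g.eval (γ s) < 0 := by linarith
      have h2 : 0 < -f.eval (γ s) - g.eval (γ (s+1)) := by linarith
      exact mul_neg_of_neg_of_pos h1 h2
  have hz' : ∀ s : ℕ, ∃ z : ℝ, s+1 < t →
      z ∈ Set.Ioo (γ s) (γ (s+1)) ∧ (f-g).eval z = 0 := by
    intro s
    by_cases hs : s+1 < t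
    · have hmono := hγmono s hs
      have hcont : ContinuousOn (fun x => (f-g).eval x) (Set.Icc (γ s) (γ (s+1))) :=
        (f-g).continuous.continuousOn
      rcases lt_or_ge ((f-g).eval (γ s)) 0 with hneg | hpos
      · have hpos' : 0 < (f-g).eval (γ (s+1)) := by
          rcases mul_neg_iff.mp (hsign s hs) with ⟨h1, h2⟩ | ⟨h1, h2⟩
          · linarith
          · exact h2
        have := intermediate_value_Ioo (le_of_lt hmono) hcont
        have h0 : (0:ℝ) ∈ Set.Ioo ((f-g).eval (γ s)) ((f-g).eval (γ (s+1))) := ⟨hneg, hpos'⟩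
        obtain ⟨z, hz1, hz2⟩ := this h0
        exact ⟨z, fun _ => ⟨hz1, hz2⟩⟩
      · have hneg' : (f-g).eval (γ (s+1)) < 0 := by
          rcases mul_neg_iff.mp (hsign s hs) with ⟨h1, h2⟩ | ⟨h1, h2⟩
          · exact h2
          · linarith
        have hpos'' : 0 < (f-g).eval (γ s) := by
          rcases mul_neg_iff.mp (hsign s hs) with ⟨h1, h2⟩ | ⟨h1, h2⟩
          · exact h1
          · linarith
        have := intermediate_value_Ioo' (le_of_lt hmono) hcont
        have h0 : (0:ℝ) ∈ Set.Ioo ((f-g).eval (γ (s+1))) ((f-g).eval (γ s)) := ⟨hneg', hpos''⟩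
        obtain ⟨z, hz1, hz2⟩ := this h0
        exact ⟨z, fun _ => ⟨hz1, hz2⟩⟩
    · exact ⟨0, fun h => absurd h hs⟩
  choose z hzp using hz'
  set F : Finset ℝ := ((Finset.range (t-1)).image z) ∪ {0, β} with hF
  have hzIoo : ∀ s, s < t - 1 → z s ∈ Set.Ioo (γ s) (γ (s+1)) :=
    fun s hs => (hzp s (by omega)).1
  have hz0 : ∀ s, s < t - 1 → 0 < z s := by
    intro s hs
    have := (hzIoo s hs).1
    have hmem := (hγmem s (by omega)).1
    linarith
  have hzα : ∀ s, s < t - 1 → z s < α := by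
    intro s hs
    have := (hzIoo s hs).2
    have hmem := (hγmem (s+1) (by omega)).2
    linarith
  have hzinj : Set.InjOn z (Finset.range (t-1) : Set ℕ) := by
    have hmono2 : ∀ i j, i < j → j < t - 1 → z i < z j := by
      intro i j hij hjt
      have h1 : z i < γ (i+1) := (hzIoo i (by omega)).2
      have h2 : γ j < z j := (hzIoo j hjt).1
      have h3 : γ (i+1) ≤ γ j := by
        rcases Nat.lt_or_ge (i+1) j with h | h
        · exact le_of_lt (hγlt (i+1) j h (by omega))
        · have : i + 1 = j := by omega
          rw [this]
      linarith
    intro a ha b hb hab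
    simp only [Finset.coe_range, Set.mem_Iio] at ha hb
    rcases lt_trichotomy a b with h | h | h
    · exact absurd hab (ne_of_lt (hmono2 a b h hb))
    · exact h
    · exact absurd hab.symm (ne_of_lt (hmono2 b a h ha))
  have hcard : t + 1 ≤ F.card := by
    rw [hF]
    have hdisj : Disjoint ((Finset.range (t-1)).image z) ({0, β} : Finset ℝ) := by
      rw [Finset.disjoint_left]
      intro a ha hb
      simp only [Finset.mem_image, Finset.mem_range] at ha
      obtain ⟨s, hs, rfl⟩ := ha
      simp only [Finset.mem_insert, Finset.mem_singleton] at hb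
      rcases hb with h | h
      · exact absurd h (ne_of_gt (hz0 s hs))
      · exact absurd h (ne_of_lt ((hzα s hs).trans hαβ))
    rw [Finset.card_union_of_disjoint hdisj,
      Finset.card_image_of_injOn hzinj, Finset.card_range]
    have : ({0, β} : Finset ℝ).card = 2 := by
      rw [Finset.card_insert_of_notMem (by simp [ne_of_lt (h0α.trans hαβ)]),
        Finset.card_singleton]
    omega
  have hroots : ∀ i ∈ F, (f-g).eval i = 0 := by
    intro i hi
    rw [hF, Finset.mem_union] at hi
    rcases hi with hi | hi
    · simp only [Finset.mem_image, Finset.mem_range] at hi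
      obtain ⟨s, hs, rfl⟩ := hi
      exact (hzp s (by omega)).2
    · simp only [Finset.mem_insert, Finset.mem_singleton] at hi
      rcases hi with rfl | rfl
      · rw [eval_sub, hf0, hg0]; ring
      · rw [eval_sub, hfβ, hgβ]; ring
  have hfg : f - g = 0 := by
    refine Polynomial.eq_zero_of_natDegree_lt_card_of_eval_eq_zero' _ F hroots ?_
    have := natDegree_sub_le f g
    omega
  have hfeq : f = g := sub_eq_zero.mp hfg
  rw [hMfdef, hMgdef, hfeq] at hcon
  exact absurd hcon (lt_irrefl _)

set_option maxHeartbeats 1000000 in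
theorem chebyshev_solution (t : ℕ) (ht : 1 ≤ t) (α β : ℝ) (h0α : 0 < α) (hαβ : α < β)
    (r : ℕ → ℝ)
    (hr : ∀ s, r s = α * (Real.cos (Real.pi * ((s : ℝ) + 1/2) / (t : ℝ)) +
        Real.cos (Real.pi / (2 * (t : ℝ)))) / (1 + Real.cos (Real.pi / (2 * (t : ℝ)))))
    (f : Polynomial ℝ)
    (hf : f = ∏ s ∈ Finset.range t,
        Polynomial.C ((β - r s)⁻¹) * (Polynomial.X - Polynomial.C (r s))) :
    (f.natDegree ≤ t ∧ f.eval 0 = 0 ∧ f.eval β = 1 ∧ Equioscillatory f t 0 α) ∧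
    ∀ g : Polynomial ℝ, g.natDegree ≤ t → g.eval 0 = 0 → g.eval β = 1 →
      Equioscillatory g t 0 α →
      sSup ((fun x => |f.eval x|) '' Set.Icc 0 α) ≤
        sSup ((fun x => |g.eval x|) '' Set.Icc 0 α) := by
  have ht0 : (0:ℝ) < t := by exact_mod_cast ht
  set c : ℝ := Real.cos (Real.pi / (2 * (t:ℝ))) with hc
  have hc0 : 0 ≤ c := by
    apply Real.cos_nonneg_of_mem_Icc
    rw [Set.mem_Icc]
    constructor
    · have hpp : (0:ℝ) ≤ Real.pi/(2*(t:ℝ)) := by positivity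
      linarith [Real.pi_pos]
    · rw [div_le_iff₀ (by positivity)]
      have ht1 : (1:ℝ) ≤ t := by exact_mod_cast ht
      nlinarith [Real.pi_pos, ht1]
  have hc1 : (0:ℝ) < 1 + c := by linarith
  have hcle : c ≤ 1 := Real.cos_le_one _
  set x : ℕ → ℝ := fun s => Real.cos (Real.pi*((s:ℝ)+1/2)/(t:ℝ)) with hxdef
  have hrx : ∀ s, r s = α*(x s + c)/(1+c) := fun s => hr s
  have hprod := prod_eq_T t ht x (fun s => rfl)
  set T : Polynomial ℝ := Polynomial.Chebyshev.T ℝ t with hT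
  set φ : ℝ → ℝ := fun u => (1+c)*u/α - c with hφ
  have hfactor : ∀ u s, u - r s = (α/(1+c)) * (φ u - x s) := by
    intro u s
    rw [hrx s, hφ]
    field_simp
    ring
  have hφβ : 1 < φ β := by
    show 1 < (1+c)*β/α - c
    rw [lt_sub_iff_add_lt, lt_div_iff₀ h0α]
    nlinarith
  set D : ℝ := T.eval (φ β) with hD
  have hD1 : 1 ≤ D := (T_ge_one t (φ β) hφβ.le).1
  have hD0 : (0:ℝ) < D := by linarith
  have hk0 : (0:ℝ) < α/(1+c) := by positivity
  have h2t : (0:ℝ) < 2^(t-1) := by positivity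
  have heval : ∀ u, f.eval u = T.eval (φ u) / D := by
    intro u
    rw [hf, Polynomial.eval_prod]
    have hterm : ∀ s, Polynomial.eval u
        (Polynomial.C ((β - r s)⁻¹) * (Polynomial.X - Polynomial.C (r s))) =
        (φ β - x s)⁻¹ * (φ u - x s) := by
      intro s
      rw [Polynomial.eval_mul, Polynomial.eval_C, Polynomial.eval_sub,
        Polynomial.eval_X, Polynomial.eval_C]
      rw [hfactor u s, hfactor β s, mul_inv]
      rw [mul_comm ((α/(1+c))⁻¹) _, mul_assoc, inv_mul_cancel_left₀ (ne_of_gt hk0)]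
    rw [Finset.prod_congr rfl (fun s _ => hterm s)]
    rw [Finset.prod_mul_distrib, Finset.prod_inv_distrib]
    have hnum : ∏ s ∈ Finset.range t, (φ u - x s) = T.eval (φ u) / 2^(t-1) := by
      rw [hprod (φ u)]; field_simp
    have hden : ∏ s ∈ Finset.range t, (φ β - x s) = D / 2^(t-1) := by
      rw [hD, hprod (φ β)]; field_simp
    rw [hnum, hden]
    field_simp
  have hTcos : ∀ θ : ℝ, T.eval (Real.cos θ) = Real.cos ((t:ℝ)*θ) := by
    intro θ
    rw [hT, Polynomial.Chebyshev.T_real_cos]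
    norm_num
  have hφmem : ∀ u ∈ Set.Icc (0:ℝ) α, φ u ∈ Set.Icc (-1:ℝ) 1 := by
    intro u hu
    rw [hφ]
    constructor
    · have h1 : 0 ≤ (1+c)*u/α := div_nonneg (mul_nonneg hc1.le hu.1) h0α.le
      simp only
      linarith
    · simp only
      rw [sub_le_iff_le_add, div_le_iff₀ h0α]
      nlinarith [hu.2, hc1]
  have hbound : ∀ u ∈ Set.Icc (0:ℝ) α, |f.eval u| ≤ 1/D := by
    intro u hu
    rw [heval u, abs_div, abs_of_pos hD0]
    gcongr
    have hmem := hφmem u hu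
    have hcosar : φ u = Real.cos (Real.arccos (φ u)) :=
      (Real.cos_arccos hmem.1 hmem.2).symm
    rw [hcosar, hTcos]
    exact Real.abs_cos_le_one _
  have hφα : φ α = 1 := by rw [hφ]; field_simp; ring
  have hfα : f.eval α = 1/D := by
    rw [heval α, hφα, show (1:ℝ) = Real.cos 0 by simp, hTcos]
    simp
  have hsup : sSup ((fun x => |f.eval x|) '' Set.Icc 0 α) = 1/D := by
    apply IsGreatest.csSup_eq
    constructor
    · refine ⟨α, ⟨le_of_lt h0α, le_refl α⟩, ?_⟩
      simp only [hfα]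
      rw [abs_of_pos (by positivity)]
    · rintro y ⟨u, hu, rfl⟩
      exact hbound u hu
  -- equioscillation points
  set γ : ℕ → ℝ := fun k => α*(Real.cos (Real.pi*((t:ℝ)-1-k)/(t:ℝ)) + c)/(1+c) with hγ
  have hacast : ∀ k, k < t → ((t - 1 - k : ℕ) : ℝ) = (t:ℝ)-1-(k:ℝ) := by
    intro k hk
    have h1 : k ≤ t - 1 := by omega
    push_cast [Nat.cast_sub (by omega : 1 ≤ t), Nat.cast_sub h1]
    ring
  have hamem : ∀ k, k < t → Real.pi*((t:ℝ)-1-k)/(t:ℝ) ∈ Set.Icc 0 Real.pi ∧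
      Real.pi*((t:ℝ)-1-k)/(t:ℝ) ≤ Real.pi - Real.pi/(2*(t:ℝ)) := by
    intro k hk
    have hkr : (k:ℝ) ≤ (t:ℝ) - 1 := by
      have h2 : (k:ℝ) + 1 ≤ t := by exact_mod_cast hk
      linarith
    have hnn : 0 ≤ (t:ℝ)-1-k := by linarith
    have hpi := Real.pi_pos
    refine ⟨⟨by positivity, ?_⟩, ?_⟩
    · rw [div_le_iff₀ ht0]
      nlinarith
    · have hk0' : (0:ℝ) ≤ k := Nat.cast_nonneg k
      rw [div_le_iff₀ ht0]  -- goal: π (t-1-k) ≤ (π - π/(2t)) * t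
      have hexp : (Real.pi - Real.pi/(2*(t:ℝ))) * t = Real.pi * t - Real.pi/2 := by
        field_simp
      rw [hexp]
      nlinarith
  have hγval : ∀ k, k < t → f.eval (γ k) = Real.cos (Real.pi*((t:ℝ)-1-k)) / D := by
    intro k hk
    have hφγ : φ (γ k) = Real.cos (Real.pi*((t:ℝ)-1-k)/(t:ℝ)) := by
      rw [hφ, hγ]
      field_simp
      ring
    rw [heval, hφγ, hTcos]
    congr 2
    field_simp
  have habs : ∀ k, k < t → |Real.cos (Real.pi*((t:ℝ)-1-k))| = 1 := by
    intro k hk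
    rw [show Real.pi*((t:ℝ)-1-(k:ℝ)) = ((t - 1 - k : ℕ) : ℝ) * Real.pi by
      rw [hacast k hk]; ring]
    exact_mod_cast Real.abs_cos_int_mul_pi (t - 1 - k : ℕ)
  have hequi : Equioscillatory f t 0 α := by
    refine ⟨γ, ?_, ?_, ?_, ?_⟩
    · intro s hs
      rw [hγ]
      have h1 := (hamem (s+1) hs).1
      have h2 := (hamem s (by omega)).1
      have hlt : Real.pi*((t:ℝ)-1-((s+1:ℕ):ℝ))/(t:ℝ) < Real.pi*((t:ℝ)-1-(s:ℝ))/(t:ℝ) := by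
        have hpi := Real.pi_pos
        apply div_lt_div_of_pos_right ?_ ht0
        push_cast
        nlinarith
      have h1' : (0:ℝ) ≤ Real.pi*((t:ℝ)-1-((s+1:ℕ):ℝ))/(t:ℝ) := h1.1
      have hcoslt := Real.cos_lt_cos_of_nonneg_of_le_pi h1' h2.2 hlt
      simp only
      gcongr
    · intro k hk
      rw [hγ]
      have h1 := (hamem k hk).1
      have h2 := (hamem k hk).2
      constructor
      · have hge : -c ≤ Real.cos (Real.pi*((t:ℝ)-1-k)/(t:ℝ)) := by
          have h3 : Real.cos (Real.pi - Real.pi/(2*(t:ℝ))) = -c := by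
            rw [Real.cos_pi_sub, hc]
          rw [← h3]
          apply Real.cos_le_cos_of_nonneg_of_le_pi h1.1 ?_ h2
          have h4 : 0 < Real.pi/(2*(t:ℝ)) := by positivity
          linarith [Real.pi_pos]
        have h5 : 0 ≤ Real.cos (Real.pi*((t:ℝ)-1-k)/(t:ℝ)) + c := by linarith
        simp only
        exact div_nonneg (mul_nonneg h0α.le h5) hc1.le
      · have hle : Real.cos (Real.pi*((t:ℝ)-1-k)/(t:ℝ)) ≤ 1 := Real.cos_le_one _
        simp only
        rw [div_le_iff₀ hc1]
        nlinarith
    · intro k hk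
      rw [hγval k hk, hsup, abs_div, abs_of_pos hD0, habs k hk]
    · intro k hk
      rw [hγval (k+1) hk, hγval k (by omega)]
      have hstep : Real.pi*((t:ℝ)-1-((k+1:ℕ):ℝ)) = Real.pi*((t:ℝ)-1-(k:ℝ)) - Real.pi := by
        push_cast; ring
      rw [hstep, Real.cos_sub_pi]
      ring
  have hdeg : f.natDegree ≤ t := by
    rw [hf]
    refine le_trans (Polynomial.natDegree_prod_le _ _) ?_
    have h1 : ∀ s ∈ Finset.range t,
        (Polynomial.C ((β - r s)⁻¹) * (Polynomial.X - Polynomial.C (r s))).natDegree ≤ 1 := by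
      intro s _
      refine le_trans (Polynomial.natDegree_C_mul_le _ _) ?_
      rw [Polynomial.natDegree_X_sub_C]
    refine le_trans (Finset.sum_le_sum h1) ?_
    simp
  have hf0 : f.eval 0 = 0 := by
    have hrt : r (t-1) = 0 := by
      rw [hrx]
      have hxt : x (t-1) = -c := by
        rw [hxdef]
        simp only
        rw [show Real.pi*(((t-1:ℕ):ℝ)+1/2)/(t:ℝ) = Real.pi - Real.pi/(2*(t:ℝ)) by
          rw [Nat.cast_sub ht]
          field_simp
          ring]
        rw [Real.cos_pi_sub, hc]
      rw [hxt]
      simp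
    rw [hf, Polynomial.eval_prod]
    apply Finset.prod_eq_zero (Finset.mem_range.mpr (by omega : t-1 < t))
    rw [Polynomial.eval_mul, Polynomial.eval_sub, Polynomial.eval_X,
      Polynomial.eval_C, Polynomial.eval_C, hrt]
    ring
  have hfβ : f.eval β = 1 := by
    rw [heval β, ← hD]
    exact div_self (ne_of_gt hD0)
  refine ⟨⟨hdeg, hf0, hfβ, hequi⟩, ?_⟩
  intro g hgd hg0 hgβ _hge
  apply optimality t ht α β h0α hαβ f g hdeg hf0 hfβ hequi ?_ hgd hg0 hgβ
  rw [hsup]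
  positivity
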